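/- Let n be a natural number and let a_0 ≥ a_1 ≥ … ≥ a_n be positive real numbers. Define τ_n = ∫_0^∞ ∏_{k=0}^n sinc(a_k t) dt. Then τ_0 = π/(2·a_0), and more generally τ_n = π/(2·a_0) for every n such that ∑_{k=1}^n a_k ≤ a_0. -/

import Mathlib

/-!
Write `G_m(b, R) = ∫_0^R cos (b t) ∏_{k ≤ m} sinc (a_k t) dt`. Since
`2c cos (b t) sinc (c t) = ∫_{b-c}^{b+c} cos (s t) ds`, Fubini turns multiplication by
`sinc (a_{m+1} t)` into averaging over `s ∈ [b - a_{m+1}, b + a_{m+1}]`: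
`G_{m+1}(b, R) = (2 a_{m+1})⁻¹ ∫_{b-a_{m+1}}^{b+a_{m+1}} G_m(s, R) ds`, and
`G_0(b, R) = (2 a_0)⁻¹ (Si ((a_0 + b) R) + Si ((a_0 - b) R))`. All `G_m` are bounded uniformly in
`b` and `R`, so by dominated convergence `G_m(b, R) → π / (2 a_0)` whenever
`|b| + a_1 + ⋯ + a_m < a_0`; at `b = 0` the last averaging step needs this only for almost
every `s`, which allows equality in `a_1 + ⋯ + a_n ≤ a_0`.

The Dirichlet integral `Si R → π / 2` is proved by integrating by parts (the limit exists) and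
evaluating it along `R = (2n + 1) π / 2`, where `sin ((2n+1) x) / x` is the Dirichlet kernel
`sin ((2n+1) x) / sin x` plus `sin ((2n+1) x) (1/x - 1/sin x)`, whose integral over `[0, π/2]`
tends to `0` by the Riemann–Lebesgue lemma.
-/

open MeasureTheory Filter Real Finset

noncomputable def sinc (t : ℝ) : ℝ := if t = 0 then 1 else Real.sin t / t

open Set Topology
open scoped Interval

theorem sinc_eq_real_sinc (t : ℝ) : _root_.sinc t = Real.sinc t := rfl

noncomputable def Si (x : ℝ) : ℝ := ∫ t in (0 : ℝ)..x, Real.sinc t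

theorem continuous_Si : Continuous Si :=
  intervalIntegral.continuous_primitive (fun _ _ => Real.continuous_sinc.intervalIntegrable _ _) 0

theorem Si_neg (x : ℝ) : Si (-x) = -Si x := by
  have h := intervalIntegral.integral_comp_neg (a := 0) (b := x) Real.sinc
  simp only [Real.sinc_neg, neg_zero] at h
  rw [Si, Si, h, intervalIntegral.integral_symm]

theorem integral_mul_sinc_mul (c R : ℝ) :
    ∫ t in (0 : ℝ)..R, c * Real.sinc (c * t) = Si (c * R) := by
  rw [intervalIntegral.integral_const_mul, ← smul_eq_mul,
    intervalIntegral.smul_integral_comp_mul_left, mul_zero, Si]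

theorem integrableOn_cos_div_sq : IntegrableOn (fun t => cos t / t ^ 2) (Ioi 1) := by
  refine (integrableOn_Ioi_rpow_of_lt (by norm_num : (-2 : ℝ) < -1) one_pos).mono'
    (continuous_cos.measurable.div (measurable_id.pow_const 2)).aestronglyMeasurable ?_
  filter_upwards [ae_restrict_mem measurableSet_Ioi] with t (ht : 1 < t)
  rw [norm_div, norm_pow, Real.norm_eq_abs, Real.norm_eq_abs,
    abs_of_pos (by linarith : (0 : ℝ) < t), rpow_neg (by linarith), rpow_two, inv_eq_one_div]
  gcongr
  exact abs_cos_le_one t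

theorem Si_eq_of_one_le {x : ℝ} (hx : 1 ≤ x) :
    Si x = Si 1 + cos 1 - cos x / x - ∫ t in (1 : ℝ)..x, cos t / t ^ 2 := by
  have hpos : ∀ t ∈ uIcc 1 x, 0 < t := fun t ht => by
    rw [uIcc_of_le hx] at ht; linarith [ht.1]
  have hparts := intervalIntegral.integral_mul_deriv_eq_deriv_mul (a := 1) (b := x)
    (u := fun t => t⁻¹) (v := fun t => -cos t) (u' := fun t => -(t ^ 2)⁻¹) (v' := sin)
    (fun t ht => hasDerivAt_inv (hpos t ht).ne')
    (fun t _ => by simpa using (hasDerivAt_cos t).fun_neg)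
    (((continuousOn_pow 2).inv₀ fun t ht => (pow_pos (hpos t ht) 2).ne').neg.intervalIntegrable)
    (continuous_sin.intervalIntegrable _ _)
  have hsinc : ∫ t in (1 : ℝ)..x, Real.sinc t = ∫ t in (1 : ℝ)..x, t⁻¹ * sin t :=
    intervalIntegral.integral_congr fun t ht => by
      rw [Real.sinc_of_ne_zero (hpos t ht).ne', div_eq_inv_mul]
  rw [Si, ← intervalIntegral.integral_add_adjacent_intervals (b := 1)
    (Real.continuous_sinc.intervalIntegrable _ _) (Real.continuous_sinc.intervalIntegrable _ _),
    ← Si, hsinc, hparts]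
  simp only [inv_one, one_mul, mul_neg]
  rw [intervalIntegral.integral_congr (g := fun t => cos t / t ^ 2) fun t _ => by ring]
  ring

theorem exists_tendsto_Si_atTop : ∃ L, Tendsto Si atTop (𝓝 L) := by
  have hcos : Tendsto (fun x => cos x / x) atTop (𝓝 0) := by
    simp_rw [div_eq_mul_inv, mul_comm (cos _)]
    exact tendsto_inv_atTop_zero.zero_mul_isBoundedUnder_le
      (isBoundedUnder_of ⟨1, fun x => by simpa using abs_cos_le_one x⟩)
  refine ⟨_, (((tendsto_const_nhds (x := Si 1 + cos 1)).sub hcos).sub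
    (intervalIntegral_tendsto_integral_Ioi 1 integrableOn_cos_div_sq tendsto_id)).congr' ?_⟩
  filter_upwards [eventually_ge_atTop 1] with x hx
  exact (Si_eq_of_one_le hx).symm

-- Riemann–Lebesgue: up to sign, this is the imaginary part of the Fourier transform at `l / 2π`.
theorem tendsto_integral_sin_mul_atTop {g : ℝ → ℝ} (hg : Integrable g) :
    Tendsto (fun l => ∫ v, sin (l * v) * g v) atTop (𝓝 0) := by
  have hfourier := (Real.zero_at_infty_fourier (fun v => (g v : ℂ))).comp
    ((tendsto_id.atTop_div_const (by positivity : 0 < 2 * π)).mono_right atTop_le_cocompact)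
  have him := ((Complex.continuous_im.tendsto 0).comp hfourier).neg
  rw [Complex.zero_im, neg_zero] at him
  refine him.congr fun l => ?_
  have hint : Integrable fun v => Complex.exp (↑(-(l * v)) * Complex.I) * (g v : ℂ) :=
    hg.ofReal.bdd_mul (c := 1) (by fun_prop) (ae_of_all _ fun v => by
      rw [Complex.norm_exp_ofReal_mul_I])
  have hexp : ∀ v, -2 * π * v * (l / (2 * π)) = -(l * v) := fun v => by field_simp
  simp only [Function.comp_apply, id, Real.fourier_real_eq_integral_exp_smul, hexp, smul_eq_mul]
  rw [← RCLike.im_to_complex, ← integral_im hint, ← integral_neg]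
  refine integral_congr_ae (ae_of_all _ fun v => ?_)
  simp only [RCLike.im_to_complex, Complex.im_mul_ofReal, Complex.exp_ofReal_mul_I_im, sin_neg,
    neg_mul, neg_neg]

theorem tendsto_intervalIntegral_sin_mul_atTop {g : ℝ → ℝ} {a b : ℝ}
    (hg : IntervalIntegrable g volume a b) :
    Tendsto (fun l => ∫ x in a..b, sin (l * x) * g x) atTop (𝓝 0) := by
  have h := (tendsto_integral_sin_mul_atTop
    ((intervalIntegrable_iff.1 hg).integrable_indicator measurableSet_uIoc)).const_smul
    (if a ≤ b then (1 : ℝ) else -1)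
  rw [smul_zero] at h
  refine h.congr fun l => ?_
  rw [intervalIntegral.intervalIntegral_eq_integral_uIoc, ← integral_indicator measurableSet_uIoc]
  simp only [indicator_mul_right]

-- The Dirichlet kernel `D_n(θ) = 1 + 2 ∑_{j=1}^n cos (j θ)`, evaluated at `θ = 2x`.
noncomputable def dirichletKernel (n : ℕ) (x : ℝ) : ℝ :=
  1 + 2 * ∑ j ∈ Finset.Icc 1 n, cos (2 * j * x)

theorem sin_mul_dirichletKernel (n : ℕ) (x : ℝ) :
    sin x * dirichletKernel n x = sin ((2 * n + 1) * x) := by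
  induction n with
  | zero => simp [dirichletKernel]
  | succ n ih =>
    have hstep : sin ((2 * (n + 1 : ℝ) + 1) * x) - sin ((2 * n + 1) * x) =
        2 * sin x * cos (2 * (n + 1 : ℝ) * x) := by
      rw [sin_sub_sin]; ring_nf
    rw [dirichletKernel] at ih
    rw [dirichletKernel, sum_Icc_succ_top (by omega)]
    push_cast at ih ⊢
    linear_combination ih - hstep

theorem continuous_dirichletKernel (n : ℕ) : Continuous (dirichletKernel n) := by
  unfold dirichletKernel
  fun_prop

theorem integral_dirichletKernel (n : ℕ) :
    ∫ x in (0 : ℝ)..π / 2, dirichletKernel n x = π / 2 := by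
  have hcos : ∀ j ∈ Finset.Icc 1 n, ∫ x in (0 : ℝ)..π / 2, cos (2 * j * x) = 0 := by
    intro j hj
    have h2j : (2 * j : ℝ) ≠ 0 := (mul_pos two_pos (Nat.cast_pos.2 (Finset.mem_Icc.1 hj).1)).ne'
    rw [intervalIntegral.integral_comp_mul_left (fun x => cos x) h2j, integral_cos, mul_zero,
      sin_zero, show 2 * (j : ℝ) * (π / 2) = j * π by ring, sin_nat_mul_pi, sub_zero, smul_zero]
  unfold dirichletKernel
  rw [intervalIntegral.integral_add intervalIntegrable_const
    (Continuous.intervalIntegrable (by fun_prop) _ _), intervalIntegral.integral_const_mul,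
    intervalIntegral.integral_finsetSum fun j _ => Continuous.intervalIntegrable (by fun_prop) _ _,
    sum_eq_zero hcos]
  simp

theorem abs_inv_sub_inv_sin_le_one {x : ℝ} (hx : x ∈ Ioc 0 (π / 2)) :
    |x⁻¹ - (sin x)⁻¹| ≤ 1 := by
  obtain ⟨hx0, hxπ⟩ := hx
  have hsin : 2 / π * x ≤ sin x := mul_le_sin hx0.le hxπ
  have hsin0 : 0 < sin x := lt_of_lt_of_le (by positivity) hsin
  have hx6 : x / 6 ≤ 2 / π := by
    rw [div_le_div_iff₀ (by norm_num) pi_pos]; nlinarith [pi_le_four]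
  rw [inv_sub_inv hx0.ne' hsin0.ne', abs_div, abs_of_pos (mul_pos hx0 hsin0),
    div_le_one (by positivity), abs_sub_comm]
  calc |x - sin x| ≤ |x| ^ 3 / 6 := abs_sub_sin_le x
    _ = x ^ 2 * (x / 6) := by rw [abs_of_pos hx0]; ring
    _ ≤ x ^ 2 * (2 / π) := by gcongr
    _ = x * (2 / π * x) := by ring
    _ ≤ x * sin x := by gcongr

theorem tendsto_two_mul_add_one_atTop : Tendsto (fun n : ℕ => (2 * n + 1 : ℝ)) atTop atTop :=
  (tendsto_natCast_atTop_atTop.const_mul_atTop two_pos).atTop_add tendsto_const_nhds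

theorem tendsto_Si_odd_mul_pi_div_two :
    Tendsto (fun n : ℕ => Si ((2 * n + 1) * (π / 2))) atTop (𝓝 (π / 2)) := by
  set g : ℝ → ℝ := fun x => x⁻¹ - (sin x)⁻¹
  have hg : IntervalIntegrable g volume 0 (π / 2) := by
    refine (intervalIntegrable_const (c := 1)).mono_fun' (by fun_prop) ?_
    rw [uIoc_of_le (by positivity)]
    filter_upwards [ae_restrict_mem measurableSet_Ioc] with x hx
    exact abs_inv_sub_inv_sin_le_one hx
  have hSi : ∀ n : ℕ, Si ((2 * n + 1) * (π / 2)) =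
      π / 2 + ∫ x in (0 : ℝ)..π / 2, sin ((2 * n + 1) * x) * g x := by
    intro n
    have hsplit : ∀ x ∈ Ioc 0 (π / 2), (2 * n + 1) * Real.sinc ((2 * n + 1) * x) =
        dirichletKernel n x + sin ((2 * n + 1) * x) * g x := by
      rintro x ⟨hx0, hxπ⟩
      have hsin : sin x ≠ 0 := (sin_pos_of_pos_of_lt_pi hx0 (by linarith [pi_pos])).ne'
      rw [Real.sinc_of_ne_zero (by positivity), ← sin_mul_dirichletKernel n x,
        show g x = x⁻¹ - (sin x)⁻¹ from rfl]
      field_simp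
      ring
    rw [← integral_mul_sinc_mul, intervalIntegral.integral_congr_ae (ae_of_all _ fun x hx =>
      hsplit x (by rwa [uIoc_of_le (by positivity)] at hx)), intervalIntegral.integral_add
      ((continuous_dirichletKernel n).intervalIntegrable _ _)
      (hg.continuousOn_mul (by fun_prop)), integral_dirichletKernel]
  have hRL := (tendsto_intervalIntegral_sin_mul_atTop hg).comp tendsto_two_mul_add_one_atTop
  simpa [hSi] using hRL.const_add (π / 2)

theorem tendsto_Si_atTop : Tendsto Si atTop (𝓝 (π / 2)) := by
  obtain ⟨L, hL⟩ := exists_tendsto_Si_atTop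
  have hsub := hL.comp (tendsto_two_mul_add_one_atTop.atTop_mul_const (by positivity : 0 < π / 2))
  rwa [tendsto_nhds_unique hsub tendsto_Si_odd_mul_pi_div_two] at hL

theorem exists_abs_Si_le : ∃ C, ∀ x, |Si x| ≤ C := by
  obtain ⟨X, hX⟩ := eventually_atTop.1
    ((continuous_abs.tendsto _).comp tendsto_Si_atTop |>.eventually (gt_mem_nhds (lt_add_one _)))
  obtain ⟨C, hC⟩ :=
    isCompact_Icc.exists_bound_of_continuousOn (s := Icc 0 X) continuous_Si.continuousOn
  refine ⟨max C (|π / 2| + 1), fun x => ?_⟩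
  wlog hx : 0 ≤ x generalizing x
  · simpa [Si_neg] using this (-x) (by linarith)
  rcases le_total x X with h | h
  · exact le_max_of_le_left (hC x ⟨hx, h⟩)
  · exact le_max_of_le_right (hX x h).le

theorem tendsto_Si_const_mul_atTop {c : ℝ} (hc : 0 < c) :
    Tendsto (fun R => Si (c * R)) atTop (𝓝 (π / 2)) :=
  tendsto_Si_atTop.comp (tendsto_id.const_mul_atTop hc)

theorem mul_sinc_mul (c : ℝ) {t : ℝ} (ht : t ≠ 0) :
    c * Real.sinc (c * t) = sin (c * t) / t := by
  rcases eq_or_ne c 0 with rfl | hc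
  · simp
  · rw [Real.sinc_of_ne_zero (mul_ne_zero hc ht)]
    field_simp

theorem integral_cos_mul_eq_mul_sinc (b c t : ℝ) :
    ∫ s in b - c..b + c, cos (s * t) = 2 * c * (cos (b * t) * Real.sinc (c * t)) := by
  rcases eq_or_ne t 0 with rfl | ht
  · simp only [mul_zero, cos_zero, intervalIntegral.integral_const, add_sub_sub_cancel,
      smul_eq_mul, mul_one, Real.sinc_zero]
    ring
  rw [intervalIntegral.integral_comp_mul_right cos ht, integral_cos, smul_eq_mul, sin_sub_sin,
    show ((b + c) * t - (b - c) * t) / 2 = c * t by ring,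
    show ((b + c) * t + (b - c) * t) / 2 = b * t by ring,
    show 2 * c * (cos (b * t) * Real.sinc (c * t)) =
      2 * cos (b * t) * (c * Real.sinc (c * t)) by ring,
    mul_sinc_mul c ht]
  ring

theorem cos_mul_mul_sinc_mul (b : ℝ) {c : ℝ} (hc : c ≠ 0) (t : ℝ) :
    cos (b * t) * Real.sinc (c * t) =
      (2 * c)⁻¹ * ((c + b) * Real.sinc ((c + b) * t) + (c - b) * Real.sinc ((c - b) * t)) := by
  rcases eq_or_ne t 0 with rfl | ht
  · field_simp
    simp only [mul_zero, cos_zero, one_mul, zero_mul, Real.sinc_zero, mul_one, add_add_sub_cancel]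
    ring
  rw [mul_sinc_mul _ ht, mul_sinc_mul _ ht, Real.sinc_of_ne_zero (mul_ne_zero hc ht),
    add_mul, sub_mul, sin_add, sin_sub]
  field_simp
  ring

noncomputable def cosTransform (f : ℝ → ℝ) (b R : ℝ) : ℝ :=
  ∫ t in (0 : ℝ)..R, cos (b * t) * f t

theorem cosTransform_zero (f : ℝ → ℝ) (R : ℝ) :
    cosTransform f 0 R = ∫ t in (0 : ℝ)..R, f t := by
  simp [cosTransform]

theorem continuous_cosTransform {f : ℝ → ℝ} (hf : Continuous f) (R : ℝ) :
    Continuous fun b => cosTransform f b R :=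
  intervalIntegral.continuous_parametric_intervalIntegral_of_continuous' (by fun_prop) _ _

theorem cosTransform_sinc {c : ℝ} (hc : c ≠ 0) (b R : ℝ) :
    cosTransform (fun t => Real.sinc (c * t)) b R =
      (2 * c)⁻¹ * (Si ((c + b) * R) + Si ((c - b) * R)) := by
  simp only [cosTransform, cos_mul_mul_sinc_mul b hc, intervalIntegral.integral_const_mul]
  rw [intervalIntegral.integral_add (Continuous.intervalIntegrable (by fun_prop) _ _)
    (Continuous.intervalIntegrable (by fun_prop) _ _), integral_mul_sinc_mul, integral_mul_sinc_mul]

theorem cosTransform_mul_sinc {f : ℝ → ℝ} (hf : Continuous f) {c : ℝ} (hc : c ≠ 0)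
    (b R : ℝ) :
    cosTransform (fun t => f t * Real.sinc (c * t)) b R =
      (2 * c)⁻¹ * ∫ s in b - c..b + c, cosTransform f s R := by
  have hswap : ∫ s in b - c..b + c, cosTransform f s R =
      ∫ t in (0 : ℝ)..R, ∫ s in b - c..b + c, cos (s * t) * f t :=
    intervalIntegral_intervalIntegral_swap ((ContinuousOn.integrableOn_compact
      (isCompact_uIcc.prod isCompact_uIcc) (Continuous.continuousOn (by fun_prop))).mono_set
      (prod_mono uIoc_subset_uIcc uIoc_subset_uIcc))
  rw [hswap, cosTransform, ← intervalIntegral.integral_const_mul]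
  refine intervalIntegral.integral_congr fun t _ => ?_
  rw [intervalIntegral.integral_mul_const, integral_cos_mul_eq_mul_sinc]
  field_simp

section Average

variable {α : Type*} {F : ℝ → α → ℝ} {C L b c : ℝ}

theorem abs_average_le (hc : c ≠ 0) (x : α) (hF : ∀ s, |F s x| ≤ C) :
    |(2 * c)⁻¹ * ∫ s in b - c..b + c, F s x| ≤ C := by
  have h := intervalIntegral.norm_integral_le_of_norm_le_const (a := b - c) (b := b + c)
    fun s _ => (Real.norm_eq_abs _).trans_le (hF s)
  rw [Real.norm_eq_abs, show b + c - (b - c) = 2 * c by ring] at h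
  rw [abs_mul, abs_inv]
  calc |2 * c|⁻¹ * |∫ s in b - c..b + c, F s x| ≤ |2 * c|⁻¹ * (C * |2 * c|) := by gcongr
    _ = C := by field_simp

theorem tendsto_average_of_ae_tendsto {l : Filter α} [l.IsCountablyGenerated] (hc : c ≠ 0)
    (hF : ∀ x, Continuous fun s => F s x) (hC : ∀ s x, |F s x| ≤ C)
    (hlim : ∀ᵐ s, s ∈ Ι (b - c) (b + c) → Tendsto (F s) l (𝓝 L)) :
    Tendsto (fun x => (2 * c)⁻¹ * ∫ s in b - c..b + c, F s x) l (𝓝 L) := by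
  have hdct := intervalIntegral.tendsto_integral_filter_of_dominated_convergence (fun _ => C)
    (Eventually.of_forall fun x => (hF x).aestronglyMeasurable)
    (Eventually.of_forall fun x => ae_of_all _ fun s _ => (Real.norm_eq_abs _).trans_le (hC s x))
    intervalIntegrable_const hlim
  rw [intervalIntegral.integral_const, smul_eq_mul, show b + c - (b - c) = 2 * c by ring] at hdct
  have h := hdct.const_mul (2 * c)⁻¹
  rwa [inv_mul_cancel_left₀ (mul_ne_zero two_ne_zero hc)] at h

end Average

noncomputable def sincProd (a : ℕ → ℝ) (m : ℕ) (t : ℝ) : ℝ :=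
  ∏ k ∈ Finset.range (m + 1), Real.sinc (a k * t)

theorem continuous_sincProd (a : ℕ → ℝ) (m : ℕ) : Continuous (sincProd a m) := by
  unfold sincProd
  fun_prop

theorem cosTransform_sincProd_zero (a : ℕ → ℝ) (ha : a 0 ≠ 0) (b R : ℝ) :
    cosTransform (sincProd a 0) b R =
      (2 * a 0)⁻¹ * (Si ((a 0 + b) * R) + Si ((a 0 - b) * R)) := by
  have hprod : sincProd a 0 = fun t => Real.sinc (a 0 * t) := funext fun t => prod_range_one _
  rw [hprod, cosTransform_sinc ha]

theorem cosTransform_sincProd_succ (a : ℕ → ℝ) (m : ℕ) (ha : a (m + 1) ≠ 0) (b R : ℝ) :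
    cosTransform (sincProd a (m + 1)) b R =
      (2 * a (m + 1))⁻¹ *
        ∫ s in b - a (m + 1)..b + a (m + 1), cosTransform (sincProd a m) s R := by
  rw [← cosTransform_mul_sinc (continuous_sincProd a m) ha]
  congr 1
  exact funext fun t => prod_range_succ _ (m + 1)

theorem exists_abs_cosTransform_sincProd_le (a : ℕ → ℝ) (m : ℕ)
    (ha : ∀ k ≤ m, a k ≠ 0) :
    ∃ C, ∀ b R, |cosTransform (sincProd a m) b R| ≤ C := by
  induction m with
  | zero =>
    obtain ⟨C, hC⟩ := exists_abs_Si_le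
    refine ⟨|(2 * a 0)⁻¹| * (C + C), fun b R => ?_⟩
    rw [cosTransform_sincProd_zero a (ha 0 le_rfl), abs_mul]
    gcongr
    exact (abs_add_le _ _).trans (add_le_add (hC _) (hC _))
  | succ m ih =>
    obtain ⟨C, hC⟩ := ih fun k hk => ha k (by omega)
    refine ⟨C, fun b R => ?_⟩
    rw [cosTransform_sincProd_succ a m (ha _ le_rfl)]
    exact abs_average_le (ha _ le_rfl) R fun s => hC s R

theorem tendsto_cosTransform_sincProd_succ (a : ℕ → ℝ) (m : ℕ)
    (ha : ∀ k ≤ m + 1, a k ≠ 0) {b L : ℝ}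
    (hlim : ∀ᵐ s, s ∈ Ι (b - a (m + 1)) (b + a (m + 1)) →
      Tendsto (cosTransform (sincProd a m) s) atTop (𝓝 L)) :
    Tendsto (cosTransform (sincProd a (m + 1)) b) atTop (𝓝 L) := by
  obtain ⟨C, hC⟩ := exists_abs_cosTransform_sincProd_le a m fun k hk => ha k (by omega)
  refine (tendsto_average_of_ae_tendsto (ha _ le_rfl)
    (continuous_cosTransform (continuous_sincProd a m)) hC hlim).congr fun R => ?_
  rw [cosTransform_sincProd_succ a m (ha _ le_rfl)]

theorem abs_le_abs_add_of_mem_uIoc {b c s : ℝ} (hc : 0 ≤ c) (hs : s ∈ Ι (b - c) (b + c)) :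
    |s| ≤ |b| + c := by
  rw [uIoc_of_le (by linarith)] at hs
  exact abs_le.2 ⟨by linarith [neg_abs_le b, hs.1], by linarith [le_abs_self b, hs.2]⟩

theorem tendsto_cosTransform_sincProd (a : ℕ → ℝ) (m : ℕ) (hpos : ∀ k ≤ m, 0 < a k)
    {b : ℝ} (hb : |b| + ∑ k ∈ Finset.Icc 1 m, a k < a 0) :
    Tendsto (cosTransform (sincProd a m) b) atTop (𝓝 (π / (2 * a 0))) := by
  induction m generalizing b with
  | zero =>
    rw [Finset.Icc_eq_empty_of_lt zero_lt_one, sum_empty, add_zero, abs_lt] at hb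
    have hlim := ((tendsto_Si_const_mul_atTop (by linarith : 0 < a 0 + b)).add
      (tendsto_Si_const_mul_atTop (by linarith : 0 < a 0 - b))).const_mul (2 * a 0)⁻¹
    rw [show (2 * a 0)⁻¹ * (π / 2 + π / 2) = π / (2 * a 0) by ring] at hlim
    exact hlim.congr fun R => (cosTransform_sincProd_zero a (by linarith) b R).symm
  | succ m ih =>
    rw [sum_Icc_succ_top (by omega)] at hb
    refine tendsto_cosTransform_sincProd_succ a m (fun k hk => (hpos k hk).ne')
      (ae_of_all _ fun s hs => ih (fun k hk => hpos k (by omega)) ?_)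
    linarith [abs_le_abs_add_of_mem_uIoc (hpos (m + 1) le_rfl).le hs]

theorem tendsto_integral_sincProd (a : ℕ → ℝ) (n : ℕ) (hpos : ∀ k ≤ n, 0 < a k)
    (hsum : ∑ k ∈ Finset.Icc 1 n, a k ≤ a 0) :
    Tendsto (fun R => ∫ t in (0 : ℝ)..R, sincProd a n t) atTop (𝓝 (π / (2 * a 0))) := by
  simp_rw [← cosTransform_zero]
  cases n with
  | zero => exact tendsto_cosTransform_sincProd a 0 hpos (by simpa using hpos 0 le_rfl)
  | succ m =>
    rw [sum_Icc_succ_top (by omega)] at hsum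
    refine tendsto_cosTransform_sincProd_succ a m (fun k hk => (hpos k hk).ne') ?_
    -- the strict inequality fails only at the endpoint `s = a (m + 1)`, a null set
    filter_upwards [volume.ae_ne (a (m + 1))] with s hne hs
    refine tendsto_cosTransform_sincProd a m (fun k hk => hpos k (by omega)) ?_
    rw [zero_sub, zero_add, uIoc_of_le (by linarith [hpos (m + 1) le_rfl])] at hs
    linarith [abs_lt.2 ⟨hs.1, lt_of_le_of_ne hs.2 hne⟩]

theorem tau_eq_general (n : ℕ) (a : ℕ → ℝ)
    (hpos : ∀ k ≤ n, 0 < a k)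
    (hsum : (∑ k ∈ Finset.Icc 1 n, a k) ≤ a 0) :
    Filter.Tendsto (fun R : ℝ => ∫ t in (0:ℝ)..R, _root_.sinc (a 0 * t))
      Filter.atTop (nhds (π / (2 * a 0))) ∧
    Filter.Tendsto
      (fun R : ℝ => ∫ t in (0:ℝ)..R, ∏ k ∈ Finset.range (n + 1), _root_.sinc (a k * t))
      Filter.atTop (nhds (π / (2 * a 0))) := by
  simp only [sinc_eq_real_sinc]
  have h0 := tendsto_integral_sincProd a 0 (fun k hk => hpos k (by omega))
    (by simpa using (hpos 0 (Nat.zero_le n)).le)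
  simp only [sincProd, zero_add, prod_range_one] at h0
  exact ⟨h0, tendsto_integral_sincProd a n hpos hsum⟩

/-- If `a_0 ≥ a_1 ≥ … ≥ a_n > 0` then `τ_0 = π/(2 a_0)`, and
`τ_n = π/(2 a_0)` whenever `∑_{k=1}^n a_k ≤ a_0`, where the improper integrals
are limits of `∫_0^R` as `R → ∞`. -/
theorem tau_eq (n : ℕ) (a : ℕ → ℝ)
    (hpos : ∀ k ≤ n, 0 < a k)
    (hmono : ∀ k, k + 1 ≤ n → a (k + 1) ≤ a k)
    (hsum : (∑ k ∈ Finset.Icc 1 n, a k) ≤ a 0) :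
    Filter.Tendsto (fun R : ℝ => ∫ t in (0:ℝ)..R, _root_.sinc (a 0 * t))
      Filter.atTop (nhds (π / (2 * a 0))) ∧
    Filter.Tendsto
      (fun R : ℝ => ∫ t in (0:ℝ)..R, ∏ k ∈ Finset.range (n + 1), _root_.sinc (a k * t))
      Filter.atTop (nhds (π / (2 * a 0))) :=
  tau_eq_general n a hpos hsum
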